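/- If R is a local ring, then a nonzero right R-module M is co-Kasch if and only if Rad(M) ≠ M. -/
import Mathlib


def IsCoKasch (R : Type*) [Ring R] (M : Type*) [AddCommGroup M] [Module R M] : Prop :=
  ∀ (K : Submodule R M) (S : Submodule R (M ⧸ K)), IsSimpleModule R S →
    ∃ f : M →ₗ[R] S, Function.Surjective f

section Aux

variable {R : Type*} [Ring R] [IsLocalRing R]

/-- In a (possibly noncommutative) local ring, left invertible implies unit. -/
lemma aux_isUnit_of_left_inv {u x : R} (h : u * x = 1) : IsUnit x := by
  have hsum : x * u + (1 - x * u) = 1 := by noncomm_ring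
  rcases IsLocalRing.isUnit_or_isUnit_of_add_one hsum with hu | hu
  · -- x*u is an idempotent unit, hence 1
    have hid : (x * u) * (x * u) = x * u := by
      calc (x * u) * (x * u) = x * (u * x) * u := by noncomm_ring
        _ = x * u := by rw [h, mul_one]
    obtain ⟨v, hv⟩ := hu
    have h1 : x * u = 1 := by
      calc x * u = 1 * (x * u) := by noncomm_ring
        _ = (↑v⁻¹ * ↑v) * (x * u) := by rw [v.inv_mul]
        _ = ↑v⁻¹ * (↑v * (x * u)) := by rw [mul_assoc]
        _ = ↑v⁻¹ * ((x * u) * (x * u)) := by rw [hv]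
        _ = ↑v⁻¹ * (x * u) := by rw [hid]
        _ = ↑v⁻¹ * ↑v := by rw [hv]
        _ = 1 := v.inv_mul
    exact ⟨⟨x, u, h1, h⟩, rfl⟩
  · exfalso
    have h0 : (1 - x * u) * x = 0 := by
      calc (1 - x * u) * x = x - x * (u * x) := by noncomm_ring
        _ = 0 := by rw [h, mul_one, sub_self]
    obtain ⟨v, hv⟩ := hu
    have hx0 : x = 0 := by
      calc x = 1 * x := (one_mul x).symm
        _ = (↑v⁻¹ * ↑v) * x := by rw [v.inv_mul]
        _ = ↑v⁻¹ * ((1 - x * u) * x) := by rw [hv, mul_assoc]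
        _ = 0 := by rw [h0, mul_zero]
    exact one_ne_zero (show (1 : R) = 0 by rw [← h, hx0, mul_zero])

lemma aux_isUnit_of_isUnit_mul_left {c a : R} (h : IsUnit (c * a)) : IsUnit a := by
  obtain ⟨v, hv⟩ := h
  exact aux_isUnit_of_left_inv (u := ↑v⁻¹ * c) (by rw [mul_assoc, ← hv, v.inv_mul])

/-- The set of nonunits in a local ring is a (left) ideal. -/
def nonunitsIdeal (R : Type*) [Ring R] [IsLocalRing R] : Ideal R where
  carrier := nonunits R
  zero_mem' := not_isUnit_zero
  add_mem' := by
    intro a b ha hb hab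
    obtain ⟨w, hw⟩ := hab
    have h1 : (↑w⁻¹ * a) + (↑w⁻¹ * b) = 1 := by
      rw [← mul_add, ← hw, w.inv_mul]
    rcases IsLocalRing.isUnit_or_isUnit_of_add_one h1 with h | h
    · exact ha (aux_isUnit_of_isUnit_mul_left h)
    · exact hb (aux_isUnit_of_isUnit_mul_left h)
  smul_mem' := by
    intro r x hx h
    exact hx (aux_isUnit_of_isUnit_mul_left (c := r) h)

lemma aux_le_nonunits {I : Ideal R} (hI : I ≠ ⊤) : I ≤ nonunitsIdeal R :=
  fun _x hx hu => hI (I.eq_top_of_isUnit_mem hx hu)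

lemma aux_nonunits_ne_top : nonunitsIdeal R ≠ ⊤ := by
  intro h
  have : (1 : R) ∈ nonunitsIdeal R := h ▸ Submodule.mem_top
  exact this isUnit_one

lemma aux_coatom_nonunits : IsCoatom (nonunitsIdeal R) := by
  constructor
  · exact aux_nonunits_ne_top
  · intro x hx
    by_contra hne
    exact absurd (aux_le_nonunits hne) (not_le_of_gt hx)

lemma aux_coatom_eq {m : Ideal R} (hm : IsCoatom m) : m = nonunitsIdeal R := by
  by_contra hne
  have hlt : m < nonunitsIdeal R := lt_of_le_of_ne (aux_le_nonunits hm.1) hne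
  exact aux_nonunits_ne_top (hm.2 _ hlt)

lemma aux_simple_equiv (S : Type*) [AddCommGroup S] [Module R S] [IsSimpleModule R S] :
    Nonempty ((R ⧸ nonunitsIdeal R) ≃ₗ[R] S) := by
  haveI : Nontrivial S := IsSimpleModule.nontrivial R S
  obtain ⟨x, hx⟩ := exists_ne (0 : S)
  set f := LinearMap.toSpanSingleton R S x with hf
  have hsurj : Function.Surjective f := by
    rw [← LinearMap.range_eq_top, ← LinearMap.span_singleton_eq_range]
    refine (eq_bot_or_eq_top _).resolve_left ?_
    intro hbot
    exact hx (by
      have hmem : x ∈ Submodule.span R {x} := Submodule.mem_span_singleton_self x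
      rw [hbot] at hmem
      simpa using hmem)
  have e : (R ⧸ LinearMap.ker f) ≃ₗ[R] S := f.quotKerEquivOfSurjective hsurj
  haveI : IsSimpleModule R (R ⧸ LinearMap.ker f) := IsSimpleModule.congr e
  have hco : IsCoatom (LinearMap.ker f) := isSimpleModule_iff_isCoatom.mp ‹_›
  exact ⟨(aux_coatom_eq hco) ▸ e⟩

lemma aux_simple_surj (A B : Type*) [AddCommGroup A] [Module R A] [AddCommGroup B] [Module R B]
    [IsSimpleModule R A] [IsSimpleModule R B] : ∃ f : A →ₗ[R] B, Function.Surjective f := by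
  obtain ⟨eA⟩ := aux_simple_equiv (R := R) A
  obtain ⟨eB⟩ := aux_simple_equiv (R := R) B
  exact ⟨eB.toLinearMap.comp eA.symm.toLinearMap, eB.surjective.comp eA.symm.surjective⟩

end Aux

/-- Over a local ring, a nonzero module is co-Kasch iff `Rad(M) ≠ M`. -/
theorem stmt8 (R : Type u) [Ring R] [IsLocalRing R] (M : Type u) [AddCommGroup M]
    [Module R M] [Nontrivial M] :
    IsCoKasch R M ↔ sInf {N : Submodule R M | IsCoatom N} ≠ ⊤ := by
  constructor
  · intro h
    obtain ⟨x, hx⟩ := exists_ne (0 : M)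
    set f := LinearMap.toSpanSingleton R M x with hf
    set J := nonunitsIdeal R with hJ
    set K := Submodule.map f J with hK
    set g := K.mkQ.comp f with hg
    have hkerf : LinearMap.ker f ≤ J := by
      apply aux_le_nonunits
      intro ht
      have h1 : (1 : R) ∈ LinearMap.ker f := ht ▸ Submodule.mem_top
      have : f 1 = 0 := h1
      rw [hf, LinearMap.toSpanSingleton_apply, one_smul] at this
      exact hx this
    have hxK : x ∉ K := by
      intro hxK
      obtain ⟨a, haJ, hax⟩ := hxK
      have h1a : (1 - a) ∈ LinearMap.ker f := by
        rw [LinearMap.mem_ker, hf, LinearMap.toSpanSingleton_apply, sub_smul, one_smul]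
        rw [hf, LinearMap.toSpanSingleton_apply] at hax
        rw [hax, sub_self]
      have hone : (1 : R) ∈ J := by
        have := J.add_mem haJ (hkerf h1a)
        simpa using this
      exact hone isUnit_one
    have hgker : LinearMap.ker g = J := by
      apply le_antisymm
      · apply aux_le_nonunits
        intro ht
        have h1 : (1 : R) ∈ LinearMap.ker g := ht ▸ Submodule.mem_top
        have hg1 : g 1 = 0 := h1
        rw [hg, LinearMap.comp_apply, hf, LinearMap.toSpanSingleton_apply, one_smul,
          Submodule.mkQ_apply, Submodule.Quotient.mk_eq_zero] at hg1
        exact hxK hg1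
      · intro a haJ
        rw [LinearMap.mem_ker, hg, LinearMap.comp_apply, Submodule.mkQ_apply,
          Submodule.Quotient.mk_eq_zero]
        exact ⟨a, haJ, rfl⟩
    have hsimple : IsSimpleModule R (LinearMap.range g) := by
      have hco : IsCoatom (LinearMap.ker g) := hgker ▸ aux_coatom_nonunits
      haveI : IsSimpleModule R (R ⧸ LinearMap.ker g) := isSimpleModule_iff_isCoatom.mpr hco
      exact IsSimpleModule.congr g.quotKerEquivRange.symm
    obtain ⟨φ, hφ⟩ := h K (LinearMap.range g) hsimple
    have hco : IsCoatom (LinearMap.ker φ) := by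
      haveI : IsSimpleModule R ↥(LinearMap.range g) := hsimple
      have e : (M ⧸ LinearMap.ker φ) ≃ₗ[R] ↥(LinearMap.range g) :=
        φ.quotKerEquivOfSurjective hφ
      haveI : IsSimpleModule R (M ⧸ LinearMap.ker φ) := IsSimpleModule.congr e
      exact isSimpleModule_iff_isCoatom.mp ‹_›
    intro htop
    have hle := sInf_le (show LinearMap.ker φ ∈ {N : Submodule R M | IsCoatom N} from hco)
    rw [htop] at hle
    exact hco.1 (top_le_iff.mp hle)
  · intro h K S hS
    have hne : {N : Submodule R M | IsCoatom N}.Nonempty := by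
      by_contra hempty
      rw [Set.not_nonempty_iff_eq_empty] at hempty
      rw [hempty, sInf_empty] at h
      exact h rfl
    obtain ⟨N, hN⟩ := hne
    haveI : IsSimpleModule R (M ⧸ N) := isSimpleModule_iff_isCoatom.mpr hN
    haveI : IsSimpleModule R ↥S := hS
    obtain ⟨ψ, hψ⟩ := aux_simple_surj (R := R) (M ⧸ N) ↥S
    exact ⟨ψ.comp N.mkQ, hψ.comp (Submodule.mkQ_surjective N)⟩
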